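/- Let F ∈ C⁰(T⁵) and let φ ∈ C²(T⁵) solve equation (★). Let x₀ ∈ K = [−1/2,1/2]⁵ be a point where φ attains its minimum over K, set ε₀ = 1/48 and u(x) = φ(x) − max_K φ + 4ε₀|x−x₀|². Let Γ_{ε₀} = { x ∈ B_{1/2}(x₀) : u(y) ≥ u(x) + ∇u(x)·(y−x) for all y ∈ B_{1/2}(x₀), and |∇u(x)| < ε₀/2 }. Then for every x ∈ Γ_{ε₀} one has (1/5)Δu(x) ≤ e^{max_K F} and det(D²u(x)) ≤ e^{5 max_K F}. -/

import Mathlib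

/-!
At a point of `Γ` the function `u` lies above its tangent plane on a neighbourhood, so its
Hessian `A` is positive semidefinite. Since `D²u = D²φ + I/6`, equation (★) reads
`(A₀₀ + A₁₁ + A₂₂ + A₃₃ + 1/3)(A₄₄ + 5/6) − Σᵢ A_{i4}² = e^F`, and the `2 × 2` minors
`A_{i4}² ≤ A_{ii} A₄₄` bound the left side from below by `tr A / 5`. AM–GM on the eigenvalues
gives `det A ≤ (tr A / 5)⁵`, and periodicity of `F` gives `F ≤ max_K F` everywhere.
-/

open MeasureTheory

/-- Partial derivative in the `i`-th coordinate direction. -/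
noncomputable def pd {n : ℕ} (i : Fin n) (f : (Fin n → ℝ) → ℝ) : (Fin n → ℝ) → ℝ :=
  fun x => fderiv ℝ f x (Pi.single i 1)

/-- Second partial derivative `∂²f/∂x^i∂x^j`. -/
noncomputable def pd2 {n : ℕ} (i j : Fin n) (f : (Fin n → ℝ) → ℝ) : (Fin n → ℝ) → ℝ :=
  pd i (pd j f)

/-- A function on `ℝⁿ` that is `1`-periodic in every coordinate, i.e. a function on `Tⁿ`. -/
def PeriodicPi {n : ℕ} (f : (Fin n → ℝ) → ℝ) : Prop :=
  ∀ x : Fin n → ℝ, ∀ i : Fin n, f (x + Pi.single i 1) = f x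

/-- The Euclidean Laplacian. -/
noncomputable def lap {n : ℕ} (f : (Fin n → ℝ) → ℝ) : (Fin n → ℝ) → ℝ :=
  fun x => ∑ i, pd2 i i f x

/-- Equation (★): the reduction of the quaternionic Monge–Ampère equation to `T⁵`. -/
def EqStar (F φ : (Fin 5 → ℝ) → ℝ) : Prop :=
  ∀ x : Fin 5 → ℝ,
    (pd2 0 0 φ x + pd2 1 1 φ x + pd2 2 2 φ x + pd2 3 3 φ x + 1) * (pd2 4 4 φ x + 1)
      - (pd2 0 4 φ x) ^ 2 - (pd2 1 4 φ x) ^ 2 - (pd2 2 4 φ x) ^ 2 - (pd2 3 4 φ x) ^ 2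
      = Real.exp (F x)

/-- The Euclidean norm of a vector in `ℝⁿ`. -/
noncomputable def eucNorm {n : ℕ} (v : Fin n → ℝ) : ℝ :=
  Real.sqrt (∑ i, (v i) ^ 2)

/-- The fundamental cube `K = [−1/2, 1/2]⁵`. -/
def Kcube : Set (Fin 5 → ℝ) :=
  Set.Icc (fun _ => -(1/2)) (fun _ => 1/2)

/-- The function `u(x) = φ(x) − max_K φ + 4ε₀|x − x₀|²` with `ε₀ = 1/48`. -/
noncomputable def uAux (φ : (Fin 5 → ℝ) → ℝ) (x₀ : Fin 5 → ℝ) : (Fin 5 → ℝ) → ℝ :=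
  fun x => φ x - sSup (φ '' Kcube) + 4 * (1/48) * ∑ i, (x i - x₀ i) ^ 2

/-- The set `Γ_{ε₀}` of points of the ball `B_{1/2}(x₀)` where `u` admits a supporting
hyperplane (on that ball) and the gradient of `u` is smaller than `ε₀/2`, with `ε₀ = 1/48`. -/
noncomputable def GammaSet (φ : (Fin 5 → ℝ) → ℝ) (x₀ : Fin 5 → ℝ) : Set (Fin 5 → ℝ) :=
  {x | eucNorm (x - x₀) < 1/2 ∧
    (∀ y : Fin 5 → ℝ, eucNorm (y - x₀) < 1/2 →
      uAux φ x₀ x + ∑ i, pd i (uAux φ x₀) x * (y i - x i) ≤ uAux φ x₀ y) ∧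
    eucNorm (fun i => pd i (uAux φ x₀) x) < (1/48) / 2}


open Filter Topology

def periods {α β : Type*} [AddGroup α] (f : α → β) : AddSubgroup α where
  carrier := {v | ∀ y, f (y + v) = f y}
  add_mem' {v w} hv hw y := by rw [← add_assoc, hw, hv]
  zero_mem' y := by rw [add_zero]
  neg_mem' {v} hv y := by rw [← hv (y + -v), neg_add_cancel_right]

theorem PeriodicPi.intCast_mem_periods {n : ℕ} {f : (Fin n → ℝ) → ℝ} (hf : PeriodicPi f)
    (k : Fin n → ℤ) : (fun i => (k i : ℝ)) ∈ periods f := by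
  rw [pi_eq_sum_univ' fun i => (k i : ℝ)]
  refine AddSubgroup.sum_mem _ fun i _ => ?_
  rw [Int.cast_smul_eq_zsmul]
  exact AddSubgroup.zsmul_mem _ (show Pi.single i 1 ∈ periods f from fun y => hf y i) _

theorem PeriodicPi.exists_mem_Icc_apply_eq {n : ℕ} {f : (Fin n → ℝ) → ℝ} (hf : PeriodicPi f)
    (x : Fin n → ℝ) : ∃ y ∈ Set.Icc (fun _ => -(1/2)) (fun _ => 1/2), f y = f x := by
  refine ⟨fun i => x i - round (x i), ⟨fun i => ?_, fun i => ?_⟩, ?_⟩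
  · linarith [(abs_le.mp (abs_sub_round (x i))).1]
  · linarith [(abs_le.mp (abs_sub_round (x i))).2]
  · rw [← hf.intCast_mem_periods (fun i => round (x i)) (fun i => x i - round (x i))]
    congr 1
    ext i
    simp

theorem PeriodicPi.le_sSup_image_Icc {n : ℕ} {f : (Fin n → ℝ) → ℝ} (hf : PeriodicPi f)
    (hcont : Continuous f) (x : Fin n → ℝ) :
    f x ≤ sSup (f '' Set.Icc (fun _ => -(1/2)) (fun _ => 1/2)) := by
  obtain ⟨y, hy, hyx⟩ := hf.exists_mem_Icc_apply_eq x
  rw [← hyx]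
  exact le_csSup (isCompact_Icc.image hcont).bddAbove ⟨y, hy, rfl⟩

theorem IsLocalMin.deriv_deriv_nonneg {g : ℝ → ℝ} {a : ℝ} (h : IsLocalMin g a)
    (hg : ContinuousAt g a) : 0 ≤ deriv (deriv g) a := by
  by_contra! hneg
  have hconst : g =ᶠ[𝓝 a] fun _ => g a :=
    (h.and (isLocalMax_of_deriv_deriv_neg hneg h.deriv_eq_zero hg)).mono
      fun _ hy => le_antisymm hy.2 hy.1
  have hderiv : deriv g =ᶠ[𝓝 a] fun _ => 0 :=
    hconst.eventuallyEq_nhds.mono fun _ hy => by rw [hy.deriv_eq, deriv_const]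
  rw [hderiv.deriv_eq, deriv_const] at hneg
  exact hneg.false

theorem fderiv_fderiv_apply_self_nonneg_of_tangent_le {E : Type*} [NormedAddCommGroup E]
    [NormedSpace ℝ E] {f : E → ℝ} {x : E} (hf : Differentiable ℝ f)
    (hf' : DifferentiableAt ℝ (fderiv ℝ f) x)
    (htangent : ∀ᶠ y in 𝓝 x, f x + fderiv ℝ f x (y - x) ≤ f y) (v : E) :
    0 ≤ fderiv ℝ (fderiv ℝ f) x v v := by
  set g : ℝ → ℝ := fun t => f (x + t • v) - t * fderiv ℝ f x v
  have hline (t : ℝ) : HasDerivAt (fun s : ℝ => x + s • v) v t := by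
    simpa using ((hasDerivAt_id t).smul_const v).const_add x
  have hmin : IsLocalMin g 0 := by
    have hto : Tendsto (fun t : ℝ => x + t • v) (𝓝 0) (𝓝 x) :=
      (continuous_const.add (continuous_id.smul continuous_const)).tendsto' 0 x (by simp)
    filter_upwards [hto.eventually htangent] with t ht
    simp only [g, add_sub_cancel_left, map_smul, smul_eq_mul] at ht ⊢
    simp only [zero_smul, add_zero, zero_mul, sub_zero]
    linarith
  have hderiv : deriv g = fun t => fderiv ℝ f (x + t • v) v - fderiv ℝ f x v := funext fun t =>
    (((hf _).hasFDerivAt.comp_hasDerivAt t (hline t)).sub (hasDerivAt_mul_const _)).deriv.trans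
      (by simp)
  have hderiv2 : HasDerivAt (deriv g) (fderiv ℝ (fderiv ℝ f) x v v) 0 := by
    rw [hderiv]
    simpa [Function.comp_def] using
      ((hf'.hasFDerivAt.clm_apply (hasFDerivAt_const v x)).comp_hasDerivAt_of_eq 0 (hline 0)
        (by simp)).sub_const (fderiv ℝ f x v)
  have hg : ContinuousAt g 0 :=
    ((hf _).continuousAt.comp (hline 0).continuousAt).sub (continuous_mul_const _).continuousAt
  simpa [hderiv2.deriv] using hmin.deriv_deriv_nonneg hg

theorem fderiv_apply_eq_sum_pd {n : ℕ} (f : (Fin n → ℝ) → ℝ) (x v : Fin n → ℝ) :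
    fderiv ℝ f x v = ∑ i, pd i f x * v i := by
  conv_lhs => rw [pi_eq_sum_univ' v]
  simp [map_sum, pd, mul_comm]

theorem pd2_eq_fderiv_fderiv {n : ℕ} {f : (Fin n → ℝ) → ℝ} {x : Fin n → ℝ}
    (hf : DifferentiableAt ℝ (fderiv ℝ f) x) (i j : Fin n) :
    pd2 i j f x = fderiv ℝ (fderiv ℝ f) x (Pi.single i 1) (Pi.single j 1) := by
  unfold pd2 pd
  rw [fderiv_clm_apply hf (differentiableAt_const _)]
  simp

theorem pd_uAux {φ : (Fin 5 → ℝ) → ℝ} (hφ : Differentiable ℝ φ) (x₀ y : Fin 5 → ℝ) (j : Fin 5) :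
    pd j (uAux φ x₀) y = pd j φ y + 1/6 * (y j - x₀ j) := by
  have hsq (i : Fin 5) : HasFDerivAt (fun x : Fin 5 → ℝ => (x i - x₀ i) ^ 2)
      ((2 * (y i - x₀ i)) • ContinuousLinearMap.proj (R := ℝ) (φ := fun _ : Fin 5 => ℝ) i) y := by
    simpa using ((hasFDerivAt_apply i y).sub_const (x₀ i)).pow 2
  unfold pd uAux
  rw [fderiv_fun_add (by fun_prop) (by fun_prop), fderiv_sub_const, fderiv_const_mul (by fun_prop),
    fderiv_fun_sum (by fun_prop)]
  simp only [fun i => (hsq i).fderiv, add_apply, smul_apply, sum_apply,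
    ContinuousLinearMap.proj_apply, Pi.single_apply, smul_eq_mul, mul_ite, mul_one, mul_zero,
    Finset.sum_ite_eq', Finset.mem_univ, ↓reduceIte]
  ring

theorem pd2_uAux {φ : (Fin 5 → ℝ) → ℝ} (hφ : ContDiff ℝ 2 φ) (x₀ x : Fin 5 → ℝ) (i j : Fin 5) :
    pd2 i j (uAux φ x₀) x = pd2 i j φ x + if i = j then 1/6 else 0 := by
  have hφ' : Differentiable ℝ (fderiv ℝ φ) :=
    (hφ.fderiv_right (m := 1) le_rfl).differentiable one_ne_zero
  have hpd : pd j (uAux φ x₀) = fun y => pd j φ y + 1/6 * (y j - x₀ j) :=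
    funext (pd_uAux (hφ.differentiable two_ne_zero) x₀ · j)
  rw [pd2, hpd]
  unfold pd2 pd
  rw [fderiv_fun_add (by fun_prop) (by fun_prop), fderiv_const_mul (by fun_prop), fderiv_sub_const]
  simp [(hasFDerivAt_apply j x).fderiv, Pi.single_apply, eq_comm]

theorem Matrix.posSemidef_of_symm_of_apply_self_nonneg {ι : Type*} [Fintype ι] [DecidableEq ι]
    (B : (ι → ℝ) →L[ℝ] (ι → ℝ) →L[ℝ] ℝ) (hsymm : ∀ v w, B v w = B w v)
    (hnonneg : ∀ v, 0 ≤ B v v) :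
    (Matrix.of fun i j => B (Pi.single i 1) (Pi.single j 1)).PosSemidef := by
  refine .of_dotProduct_mulVec_nonneg ?_ fun z => ?_
  · ext i j
    simp [hsymm (Pi.single i 1)]
  · have hB : B z z = ∑ i, ∑ j, z i * (B (Pi.single i 1) (Pi.single j 1) * z j) := by
      conv_lhs => rw [pi_eq_sum_univ' z]
      simp only [map_sum, map_smul, FunLike.coe_sum, FunLike.coe_smul,
        Finset.sum_apply, Pi.smul_apply, smul_eq_mul, Finset.mul_sum]
      rw [Finset.sum_comm]
      exact Finset.sum_congr rfl fun i _ => Finset.sum_congr rfl fun j _ => by ring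
    simpa [dotProduct, Matrix.mulVec, Finset.mul_sum, ← hB] using hnonneg z

theorem Matrix.PosSemidef.sq_apply_le_mul_apply_diag {ι : Type*} [Fintype ι] [DecidableEq ι]
    {A : Matrix ι ι ℝ} (hA : A.PosSemidef) (i j : ι) : A i j ^ 2 ≤ A i i * A j j := by
  have hdet := (hA.submatrix ![i, j]).det_nonneg
  have hji : A j i = A i j := by simpa using hA.1.apply i j
  rw [Matrix.det_fin_two] at hdet
  simp only [Fin.isValue, submatrix_apply, cons_val_zero, cons_val_one, cons_val_fin_one, hji,
    sub_nonneg] at hdet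
  nlinarith

theorem Matrix.PosSemidef.det_le_trace_div_card_pow {ι : Type*} [Fintype ι] [DecidableEq ι]
    {A : Matrix ι ι ℝ} (hA : A.PosSemidef) :
    A.det ≤ (A.trace / Fintype.card ι) ^ Fintype.card ι := by
  rcases isEmpty_or_nonempty ι with hι | hι
  · simp
  set μ := hA.1.eigenvalues
  have hμ : ∀ i ∈ Finset.univ, 0 ≤ μ i := fun i _ => hA.eigenvalues_nonneg i
  have hcard : (0 : ℝ) < Fintype.card ι := by exact_mod_cast Fintype.card_pos
  have amgm := Real.geom_mean_le_arith_mean Finset.univ (fun _ => 1) μ (by simp)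
    (by simpa using hcard) hμ
  simp only [Real.rpow_one, Finset.sum_const, Finset.card_univ, nsmul_eq_mul, mul_one,
    one_mul] at amgm
  have hprod : 0 ≤ ∏ i, μ i := Finset.prod_nonneg hμ
  rw [hA.1.det_eq_prod_eigenvalues, hA.1.trace_eq_sum_eigenvalues]
  simpa [Real.rpow_inv_natCast_pow hprod Fintype.card_ne_zero] using
    pow_le_pow_left₀ (Real.rpow_nonneg hprod _) amgm (Fintype.card ι)

/-- The right side is the left side of (★) at a point where `A` is the Hessian of `u`, since
`D²u = D²φ + I/6`. -/
theorem Matrix.PosSemidef.trace_div_five_le {A : Matrix (Fin 5) (Fin 5) ℝ} (hA : A.PosSemidef) :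
    A.trace / 5 ≤ (A 0 0 + A 1 1 + A 2 2 + A 3 3 + 1/3) * (A 4 4 + 5/6)
      - A 0 4 ^ 2 - A 1 4 ^ 2 - A 2 4 ^ 2 - A 3 4 ^ 2 := by
  have hdiag (i : Fin 5) : 0 ≤ A i i := hA.diag_nonneg
  have hminor (i : Fin 5) := hA.sq_apply_le_mul_apply_diag i 4
  simp only [Matrix.trace, Matrix.diag, Fin.sum_univ_five]
  nlinarith [hdiag 0, hdiag 1, hdiag 2, hdiag 3, hdiag 4, hminor 0, hminor 1, hminor 2, hminor 3]

theorem contDiff_uAux {φ : (Fin 5 → ℝ) → ℝ} (hφ : ContDiff ℝ 2 φ) (x₀ : Fin 5 → ℝ) :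
    ContDiff ℝ 2 (uAux φ x₀) := by
  unfold uAux
  fun_prop

theorem continuous_eucNorm {n : ℕ} : Continuous (eucNorm (n := n)) := by
  unfold eucNorm
  fun_prop

theorem posSemidef_hessian_uAux_of_mem_GammaSet {φ : (Fin 5 → ℝ) → ℝ} (hφ : ContDiff ℝ 2 φ)
    {x₀ x : Fin 5 → ℝ} (hx : x ∈ GammaSet φ x₀) :
    (Matrix.of fun i j => pd2 i j (uAux φ x₀) x).PosSemidef := by
  obtain ⟨hball, hsupport, -⟩ := hx
  have hu := contDiff_uAux hφ x₀
  have hu' : Differentiable ℝ (fderiv ℝ (uAux φ x₀)) :=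
    (hu.fderiv_right (m := 1) le_rfl).differentiable one_ne_zero
  have hnhds : {y | eucNorm (y - x₀) < 1/2} ∈ 𝓝 x :=
    (isOpen_lt (continuous_eucNorm.comp (continuous_sub_right x₀)) continuous_const).mem_nhds hball
  have htangent : ∀ᶠ y in 𝓝 x, uAux φ x₀ x + fderiv ℝ (uAux φ x₀) x (y - x) ≤ uAux φ x₀ y := by
    filter_upwards [hnhds] with y hy
    simpa [fderiv_apply_eq_sum_pd] using hsupport y hy
  have hsymm := hu.contDiffAt.isSymmSndFDerivAt (x := x) (by simp)
  convert Matrix.posSemidef_of_symm_of_apply_self_nonneg _ hsymm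
    (fderiv_fderiv_apply_self_nonneg_of_tangent_le (hu.differentiable two_ne_zero) (hu' x) htangent)
    using 2
  ext i j
  simp [pd2_eq_fderiv_fderiv (hu' x)]

theorem lap_and_det_bound_on_Gamma_general
    (F φ : (Fin 5 → ℝ) → ℝ) (hF : Continuous F) (hFper : PeriodicPi F)
    (hφ : ContDiff ℝ 2 φ) (heq : EqStar F φ)
    (x₀ : Fin 5 → ℝ) :
    ∀ x ∈ GammaSet φ x₀,
      (1/5) * lap (uAux φ x₀) x ≤ Real.exp (sSup (F '' Kcube)) ∧
      (Matrix.of fun i j => pd2 i j (uAux φ x₀) x).det ≤ Real.exp (5 * sSup (F '' Kcube)) := by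
  intro x hx
  set A := Matrix.of fun i j => pd2 i j (uAux φ x₀) x
  have hA : A.PosSemidef := posSemidef_hessian_uAux_of_mem_GammaSet hφ hx
  have hstar : (A 0 0 + A 1 1 + A 2 2 + A 3 3 + 1/3) * (A 4 4 + 5/6)
      - A 0 4 ^ 2 - A 1 4 ^ 2 - A 2 4 ^ 2 - A 3 4 ^ 2 = Real.exp (F x) := by
    have hφA (i j : Fin 5) : pd2 i j φ x = A i j - if i = j then 1/6 else 0 := by
      simp [A, pd2_uAux hφ]
    have := heq x
    norm_num [hφA, Fin.ext_iff] at this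
    linarith
  have htrace : A.trace / 5 ≤ Real.exp (sSup (F '' Kcube)) :=
    calc A.trace / 5 ≤ Real.exp (F x) := hstar ▸ hA.trace_div_five_le
      _ ≤ Real.exp (sSup (F '' Kcube)) := Real.exp_le_exp.mpr (hFper.le_sSup_image_Icc hF x)
  have hlap : lap (uAux φ x₀) x = A.trace := rfl
  refine ⟨by rw [hlap]; linarith, ?_⟩
  calc A.det ≤ (A.trace / 5) ^ 5 := by simpa using hA.det_le_trace_div_card_pow
    _ ≤ Real.exp (sSup (F '' Kcube)) ^ 5 :=
        pow_le_pow_left₀ (div_nonneg hA.trace_nonneg (by norm_num)) htrace 5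
    _ = Real.exp (5 * sSup (F '' Kcube)) := by rw [← Real.exp_nat_mul]; norm_num

/-- On `Γ_{ε₀}` the Laplacian and the Hessian determinant of `u` are controlled by
`max_K F`. -/
theorem lap_and_det_bound_on_Gamma
    (F φ : (Fin 5 → ℝ) → ℝ) (hF : Continuous F) (hFper : PeriodicPi F)
    (hφ : ContDiff ℝ 2 φ) (hφper : PeriodicPi φ) (heq : EqStar F φ)
    (x₀ : Fin 5 → ℝ) (hx₀ : x₀ ∈ Kcube) (hmin : ∀ y ∈ Kcube, φ x₀ ≤ φ y) :
    ∀ x ∈ GammaSet φ x₀,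
      (1/5) * lap (uAux φ x₀) x ≤ Real.exp (sSup (F '' Kcube)) ∧
      (Matrix.of fun i j => pd2 i j (uAux φ x₀) x).det ≤ Real.exp (5 * sSup (F '' Kcube)) :=
  lap_and_det_bound_on_Gamma_general F φ hF hFper hφ heq x₀
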